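/- Let f : ℝ → ℂ be a continuous function and let C ≥ 0 be such that for every complex Hilbert space H, every bounded self-adjoint operator A on H and every bounded operator R on H one has the commutator estimate ‖f(A) R − R f(A)‖ ≤ C·‖(A R − R A)(A + iI)⁻¹‖. Then for every complex Hilbert space H, all bounded self-adjoint operators A, B on H and every bounded operator R on H one has the quasi-commutator estimate ‖f(B) R − R f(A)‖ ≤ C·‖(B R − R A)(A + iI)⁻¹‖. -/

import Mathlib

/-!
Apply the hypothesis on `H ⊕ H` to `𝐀 = diag(A, B)` and `𝐑 = (0 0; R 0)`. Since the functional
calculus and inverses act blockwise on `𝐀`, both `f(𝐀)𝐑 - 𝐑f(𝐀)` and `(𝐀𝐑 - 𝐑𝐀)(𝐀 + i)⁻¹` are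
again lower-left corners, with entries `f(B)R - Rf(A)` and `(BR - RA)(A + i)⁻¹`, and the
lower-left corner embedding is isometric.
-/

open Complex

universe u

/-- Functional calculus `f(A)` for a continuous `f : ℝ → ℂ` and a (self-adjoint, hence
normal) bounded operator `A`, obtained by applying `z ↦ f (Re z)` to `A` via the
continuous functional calculus. -/
noncomputable def opFC {H : Type u} [NormedAddCommGroup H] [InnerProductSpace ℂ H]
    [CompleteSpace H] (f : ℝ → ℂ) (A : H →L[ℂ] H) : H →L[ℂ] H :=
  cfc (fun z : ℂ => f z.re) A

theorem Ring.inverse_map_of_isUnit {M₀ N₀ F : Type*} [MonoidWithZero M₀] [MonoidWithZero N₀]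
    [FunLike F M₀ N₀] [MonoidHomClass F M₀ N₀] (f : F) {x : M₀} (hx : IsUnit x) :
    Ring.inverse (f x) = f (Ring.inverse x) := by
  obtain ⟨u, rfl⟩ := hx
  simpa using Ring.inverse_unit (Units.map (f : M₀ →* N₀) u)

theorem Prod.ringInverse_mk {M₀ N₀ : Type*} [MonoidWithZero M₀] [MonoidWithZero N₀]
    {a : M₀} {b : N₀} (ha : IsUnit a) (hb : IsUnit b) :
    Ring.inverse (a, b) = (Ring.inverse a, Ring.inverse b) := by
  have hab : IsUnit (a, b) := Prod.isUnit_iff.2 ⟨ha, hb⟩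
  exact Prod.ext (Ring.inverse_map_of_isUnit (MonoidHom.fst M₀ N₀) hab).symm
    (Ring.inverse_map_of_isUnit (MonoidHom.snd M₀ N₀) hab).symm

theorem IsSelfAdjoint.isUnit_add_I_smul_one {A : Type*} [CStarAlgebra A] {a : A}
    (ha : IsSelfAdjoint a) : IsUnit (a + I • 1) := by
  have hI : -I ∉ spectrum ℂ a := fun h => by simpa using ha.im_eq_zero_of_mem_spectrum h
  rw [spectrum.notMem_iff, Algebra.algebraMap_eq_smul_one] at hI
  simpa [sub_eq_add_neg, add_comm] using hI.neg

noncomputable section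

namespace L2Prod

open ContinuousLinearMap

section

variable {𝕜 E : Type*} [RCLike 𝕜] [NormedAddCommGroup E] [InnerProductSpace 𝕜 E]

local notation "E₂" => WithLp 2 (E × E)

local notation "e" => WithLp.prodContinuousLinearEquiv 2 𝕜 E E

def lowerLeft (S : E →L[𝕜] E) : E₂ →L[𝕜] E₂ :=
  (e).symm.toContinuousLinearMap ∘L inr 𝕜 E E ∘L S ∘L fst 𝕜 E E ∘L (e).toContinuousLinearMap

@[simp]
theorem lowerLeft_apply (S : E →L[𝕜] E) (x : E₂) : lowerLeft S x = WithLp.toLp 2 (0, S x.fst) :=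
  rfl

theorem lowerLeft_sub (S T : E →L[𝕜] E) : lowerLeft (S - T) = lowerLeft S - lowerLeft T := by
  ext x
  simp [← WithLp.toLp_sub]

theorem norm_lowerLeft (S : E →L[𝕜] E) : ‖lowerLeft S‖ = ‖S‖ := by
  refine le_antisymm (opNorm_le_bound _ (norm_nonneg S) fun x => ?_)
    (opNorm_le_bound _ (norm_nonneg _) fun u => ?_)
  · calc ‖lowerLeft S x‖ = ‖S x.fst‖ := by simp
      _ ≤ ‖S‖ * ‖x.fst‖ := S.le_opNorm _
      _ ≤ ‖S‖ * ‖x‖ := by gcongr; exact WithLp.norm_fst_le E x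
  · calc ‖S u‖ = ‖lowerLeft S (WithLp.toLp 2 (u, 0))‖ := by simp
      _ ≤ ‖lowerLeft S‖ * ‖WithLp.toLp 2 ((u, 0) : E × E)‖ := le_opNorm _ _
      _ = ‖lowerLeft S‖ * ‖u‖ := by rw [WithLp.norm_toLp_fst]

variable [CompleteSpace E]

def diag : (E →L[𝕜] E) × (E →L[𝕜] E) →⋆ₐ[𝕜] (E₂ →L[𝕜] E₂) where
  toFun p := (e).symm.toContinuousLinearMap ∘L p.1.prodMap p.2 ∘L (e).toContinuousLinearMap
  map_one' := rfl
  map_mul' _ _ := rfl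
  map_zero' := rfl
  map_add' _ _ := rfl
  commutes' _ := rfl
  map_star' p := by
    rw [star_eq_adjoint, eq_adjoint_iff]
    intro x y
    simp [WithLp.prod_inner_apply, star_eq_adjoint, adjoint_inner_left]

@[simp]
theorem diag_apply (p : (E →L[𝕜] E) × (E →L[𝕜] E)) (x : E₂) :
    diag p x = WithLp.toLp 2 (p.1 x.fst, p.2 x.snd) :=
  rfl

theorem continuous_diag : Continuous (diag (𝕜 := 𝕜) (E := E)) :=
  continuous_const.clm_comp ((prodMapL 𝕜 E E E E).continuous.clm_comp continuous_const)

theorem diag_mul_lowerLeft (p : (E →L[𝕜] E) × (E →L[𝕜] E)) (S : E →L[𝕜] E) :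
    diag p * lowerLeft S = lowerLeft (p.2 * S) := by
  ext x
  simp

theorem lowerLeft_mul_diag (S : E →L[𝕜] E) (p : (E →L[𝕜] E) × (E →L[𝕜] E)) :
    lowerLeft S * diag p = lowerLeft (S * p.1) := by
  ext x
  simp

theorem diag_mul_lowerLeft_sub_lowerLeft_mul_diag (p : (E →L[𝕜] E) × (E →L[𝕜] E))
    (S : E →L[𝕜] E) :
    diag p * lowerLeft S - lowerLeft S * diag p = lowerLeft (p.2 * S - S * p.1) := by
  rw [diag_mul_lowerLeft, lowerLeft_mul_diag, lowerLeft_sub]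

theorem ringInverse_diag {a b : E →L[𝕜] E} (ha : IsUnit a) (hb : IsUnit b) :
    Ring.inverse (diag (a, b)) = diag (Ring.inverse a, Ring.inverse b) := by
  rw [Ring.inverse_map_of_isUnit diag (Prod.isUnit_iff.2 ⟨ha, hb⟩), Prod.ringInverse_mk ha hb]

theorem diag_add_smul_one (a b : E →L[𝕜] E) (c : 𝕜) :
    diag (a, b) + c • 1 = diag (a + c • 1, b + c • 1) := by
  rw [← Prod.mk_add_mk, map_add, ← Prod.smul_mk, map_smul, Prod.mk_one_one, map_one]

theorem isSelfAdjoint_diag {a b : E →L[𝕜] E} (ha : IsSelfAdjoint a) (hb : IsSelfAdjoint b) :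
    IsSelfAdjoint (diag (a, b)) :=
  IsSelfAdjoint.map (x := (a, b)) (Prod.ext ha.star_eq hb.star_eq) diag

end

section

variable {E : Type*} [NormedAddCommGroup E] [InnerProductSpace ℂ E] [CompleteSpace E]

theorem cfc_diag (g : ℂ → ℂ) {a b : E →L[ℂ] E} (ha : IsSelfAdjoint a) (hb : IsSelfAdjoint b)
    (hg : ContinuousOn g (spectrum ℂ a ∪ spectrum ℂ b)) :
    cfc g (diag (a, b)) = diag (cfc g a, cfc g b) := by
  have hab : IsSelfAdjoint (a, b) := Prod.ext ha.star_eq hb.star_eq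
  rw [← cfc_map_prod (S := ℂ) g a b hg hab.isStarNormal ha.isStarNormal hb.isStarNormal,
    StarAlgHom.map_cfc diag g (a, b) (by rwa [Prod.spectrum_eq]) continuous_diag
      hab.isStarNormal (hab.map diag).isStarNormal]

end

end L2Prod

end

open L2Prod

theorem opFC_diag {E : Type u} [NormedAddCommGroup E] [InnerProductSpace ℂ E] [CompleteSpace E]
    {f : ℝ → ℂ} (hf : Continuous f) {A B : E →L[ℂ] E} (hA : IsSelfAdjoint A)
    (hB : IsSelfAdjoint B) : opFC f (diag (A, B)) = diag (opFC f A, opFC f B) :=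
  cfc_diag _ hA hB (hf.comp continuous_re).continuousOn

theorem stmt11_general (f : ℝ → ℂ) (hf : Continuous f) (C : ℝ)
    (h : ∀ (H : Type u) (_ : NormedAddCommGroup H) (_ : InnerProductSpace ℂ H)
      (_ : CompleteSpace H) (A R : H →L[ℂ] H), IsSelfAdjoint A →
      ‖opFC f A * R - R * opFC f A‖ ≤
        C * ‖(A * R - R * A) * Ring.inverse (A + Complex.I • 1)‖) :
    ∀ (H : Type u) (_ : NormedAddCommGroup H) (_ : InnerProductSpace ℂ H)
      (_ : CompleteSpace H) (A B R : H →L[ℂ] H),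
      IsSelfAdjoint A → IsSelfAdjoint B →
      ‖opFC f B * R - R * opFC f A‖ ≤
        C * ‖(B * R - R * A) * Ring.inverse (A + Complex.I • 1)‖ := by
  intro H _ _ _ A B R hA hB
  have key := h _ _ _ _ (diag (A, B)) (lowerLeft R) (isSelfAdjoint_diag hA hB)
  rwa [diag_add_smul_one, ringInverse_diag hA.isUnit_add_I_smul_one hB.isUnit_add_I_smul_one,
    opFC_diag hf hA hB, diag_mul_lowerLeft_sub_lowerLeft_mul_diag,
    diag_mul_lowerLeft_sub_lowerLeft_mul_diag, lowerLeft_mul_diag, norm_lowerLeft,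
    norm_lowerLeft] at key

/-- Implication (b) ⇒ (c) of Theorem 7.1 (bounded case): if a continuous `f : ℝ → ℂ`
satisfies the commutator estimate
`‖f(A) R − R f(A)‖ ≤ C ‖(A R − R A)(A + iI)⁻¹‖` for every bounded self-adjoint `A` and
every bounded `R` on every complex Hilbert space, then one has the quasi-commutator
estimate `‖f(B) R − R f(A)‖ ≤ C ‖(B R − R A)(A + iI)⁻¹‖` for all bounded self-adjoint
`A, B` and bounded `R`. -/
theorem stmt11 (f : ℝ → ℂ) (hf : Continuous f) (C : ℝ) (hC : 0 ≤ C)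
    (h : ∀ (H : Type u) (_ : NormedAddCommGroup H) (_ : InnerProductSpace ℂ H)
      (_ : CompleteSpace H) (A R : H →L[ℂ] H), IsSelfAdjoint A →
      ‖opFC f A * R - R * opFC f A‖ ≤
        C * ‖(A * R - R * A) * Ring.inverse (A + Complex.I • 1)‖) :
    ∀ (H : Type u) (_ : NormedAddCommGroup H) (_ : InnerProductSpace ℂ H)
      (_ : CompleteSpace H) (A B R : H →L[ℂ] H),
      IsSelfAdjoint A → IsSelfAdjoint B →
      ‖opFC f B * R - R * opFC f A‖ ≤
        C * ‖(B * R - R * A) * Ring.inverse (A + Complex.I • 1)‖ :=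
  stmt11_general f hf C h
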